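/- arXiv:2509.17852 — 2 statements merged into one kernel-verified Lean document; each statement's English description precedes it below -/
import Mathlib

section
/- Let f(z) = Σ a_n z^n with a_0 = 1, and let A_n(t), G_n(t) be the Chow-Eulerian and augmented Chow polynomials of the Toeplitz matrix (a_{n-k}). Then Σ_{n≥0} A_n(t)z^n = (1-t)f(tz)/(f(tz)-t·f(z)) = 1 - t + t·H(z,t), and Σ_{n≥0} G_n(t)z^n = (1-t)f(tz)f(z)/(f(tz)-t·f(z)), where H(z,t) = Σ H_n(t)z^n is the Chow generating function. -/
open Polynomial

/-- `d`, `H` are the Chow-derangement and Chow polynomials of the Toeplitz matrix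
`(a_{n-k})`. -/
def ToeplitzChow {A : Type*} [CommRing A] (a : ℕ → A) (d H : ℕ → A[X]) : Prop :=
  d 0 = 1 ∧
  (∀ n, (d n).natDegree ≤ n) ∧
  (∀ n, reflect n (d n) = d n) ∧
  (∀ n, H n = ∑ k ∈ Finset.range (n + 1), C (a (n - k)) * d k) ∧
  (∀ n, 1 ≤ n → reflect n (H n) = X * H n)

/-- `A`, `G` are the Chow-Eulerian and augmented Chow polynomials of the Toeplitz
matrix `(a_{n-k})`: `A 0 = 1`, `tⁿ Gₙ(1/t) = Gₙ`, `tⁿ Aₙ(1/t) = Aₙ/t` for `n ≥ 1`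
(i.e. `t^{n+1} Aₙ(1/t) = Aₙ`), and `Gₙ = Σ_{k≤n} a_{n-k} A_k`. -/
def ToeplitzAugChow {R : Type*} [CommRing R] (a : ℕ → R) (A G : ℕ → R[X]) : Prop :=
  A 0 = 1 ∧
  (∀ n, (A n).natDegree ≤ n) ∧
  (∀ n, 1 ≤ n → reflect (n + 1) (A n) = A n) ∧
  (∀ n, (G n).natDegree ≤ n) ∧
  (∀ n, reflect n (G n) = G n) ∧
  (∀ n, G n = ∑ k ∈ Finset.range (n + 1), C (a (n - k)) * A k)

/-! Write `f = Σ aₙ zⁿ` and `f_t = Σ aₙ tⁿ zⁿ`. A Toeplitz convolution `Qₙ = Σ_{k≤n} a_{n-k} Pₖ`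
is the product `f · P` of generating functions, and reflecting it termwise (`Qₙ ↦ tⁿ Qₙ(1/t)`,
for `deg Pₖ ≤ k`) turns it into `f_t · P̃` with `P̃ₖ = tᵏ Pₖ(1/t)`. Since `G = f · A` is
palindromic and `t·Ãₖ = Aₖ` for `k ≥ 1`, this gives `t·f·A = t·G = f_t·(A - (1 - t))`, the
first identity, and the third is `G = f · A`. The same argument for `H = f · d` gives
`d·(f_t - t f) = 1 - t`; as `f_t - t f` has constant term `1 - t`, a non-zero-divisor, it can be
cancelled from `A·(f_t - t f) = (1 - t + t H)·(f_t - t f)`. -/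

namespace Polynomial

variable {R : Type*} [Semiring R]

theorem reflect_sum {ι : Type*} (s : Finset ι) (f : ι → R[X]) (N : ℕ) :
    reflect N (∑ i ∈ s, f i) = ∑ i ∈ s, reflect N (f i) :=
  map_sum (⟨⟨reflect N, reflect_zero⟩, fun f g => reflect_add f g N⟩ : R[X] →+ R[X]) f s

theorem reflect_eq_X_pow_mul_reflect {p : R[X]} {k n : ℕ} (hp : p.natDegree ≤ k) (hk : k ≤ n) :
    reflect n p = X ^ (n - k) * reflect k p := by
  have h := reflect_mul (1 : R[X]) p (F := n - k) (G := k) (by simp) hp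
  rwa [one_mul, reflect_one, Nat.sub_add_cancel hk] at h

theorem X_mul_reflect_eq_of_reflect_succ {p : R[X]} {n : ℕ} (hp : p.natDegree ≤ n)
    (h : reflect (n + 1) p = p) : X * reflect n p = p := by
  rw [← pow_one X, ← Nat.add_sub_cancel_left (n := n) (m := 1),
    ← reflect_eq_X_pow_mul_reflect hp n.le_succ, h]

end Polynomial

theorem PowerSeries.mk_mul_mk_eq_mk_sum_range {R : Type*} [CommSemiring R] (b p : ℕ → R) :
    mk b * mk p = mk fun n => ∑ k ∈ Finset.range (n + 1), b (n - k) * p k := by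
  ext n
  rw [coeff_mul, Finset.Nat.sum_antidiagonal_eq_sum_range_succ_mk, coeff_mk,
    ← Finset.sum_range_reflect _ (n + 1)]
  refine Finset.sum_congr rfl fun k hk => ?_
  rw [Finset.mem_range] at hk
  simp only [coeff_mk, Nat.sub_sub_self (Nat.lt_succ_iff.mp hk), Nat.add_sub_cancel]

section Toeplitz

open scoped nonZeroDivisors

variable {R : Type*} [CommRing R] (a : ℕ → R)

theorem mk_reflect_toeplitz_sum {p : ℕ → R[X]} (hp : ∀ k, (p k).natDegree ≤ k) :
    (PowerSeries.mk fun n => reflect n (∑ k ∈ Finset.range (n + 1), C (a (n - k)) * p k)) =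
      PowerSeries.mk (fun n => C (a n) * X ^ n) * PowerSeries.mk fun n => reflect n (p n) := by
  rw [PowerSeries.mk_mul_mk_eq_mk_sum_range]
  congr 1
  funext n
  rw [reflect_sum]
  refine Finset.sum_congr rfl fun k hk => ?_
  rw [reflect_C_mul, reflect_eq_X_pow_mul_reflect (hp k) (by grind), mul_assoc]

theorem ToeplitzChow.mk_eq_mul {d H : ℕ → R[X]} (h : ToeplitzChow a d H) :
    PowerSeries.mk H = PowerSeries.mk (fun n => C (a n)) * PowerSeries.mk d := by
  rw [PowerSeries.mk_mul_mk_eq_mk_sum_range]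
  exact congrArg _ (_root_.funext h.2.2.2.1)

theorem ToeplitzAugChow.mk_eq_mul {A G : ℕ → R[X]} (h : ToeplitzAugChow a A G) :
    PowerSeries.mk G = PowerSeries.mk (fun n => C (a n)) * PowerSeries.mk A := by
  rw [PowerSeries.mk_mul_mk_eq_mk_sum_range]
  exact congrArg _ (_root_.funext h.2.2.2.2.2)

theorem ToeplitzChow.mk_mul_eq {d H : ℕ → R[X]} (ha : a 0 = 1) (h : ToeplitzChow a d H) :
    PowerSeries.mk d * (PowerSeries.mk (fun n => C (a n) * X ^ n) -
        PowerSeries.C X * PowerSeries.mk fun n => C (a n)) = PowerSeries.C (1 - X) := by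
  have hH := h.mk_eq_mul
  obtain ⟨hd0, hd_deg, hd_refl, hH_def, hH_refl⟩ := h
  have hH_refl_mk : (PowerSeries.mk fun n => reflect n (H n)) =
      PowerSeries.C (1 - X) + PowerSeries.C X * PowerSeries.mk H := by
    ext (_ | n)
    · simp [hH_def, hd0, ha]
    · simp [hH_refl]
  have hH_refl_toeplitz : (PowerSeries.mk fun n => reflect n (H n)) =
      PowerSeries.mk (fun n => C (a n) * X ^ n) * PowerSeries.mk d := by
    simpa only [← hH_def, hd_refl] using mk_reflect_toeplitz_sum a hd_deg
  linear_combination hH_refl_mk - hH_refl_toeplitz + PowerSeries.C X * hH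

theorem ToeplitzAugChow.mk_mul_eq {A G : ℕ → R[X]} (h : ToeplitzAugChow a A G) :
    PowerSeries.mk A * (PowerSeries.mk (fun n => C (a n) * X ^ n) -
        PowerSeries.C X * PowerSeries.mk fun n => C (a n)) =
      PowerSeries.C (1 - X) * PowerSeries.mk (fun n => C (a n) * X ^ n) := by
  have hG := h.mk_eq_mul
  obtain ⟨hA0, hA_deg, hA_refl, -, hG_refl, hG_def⟩ := h
  have hA_refl_mk : PowerSeries.C X * (PowerSeries.mk fun n => reflect n (A n)) =
      PowerSeries.mk A - PowerSeries.C (1 - X) := by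
    ext (_ | n)
    · simp [hA0]
    · simp [X_mul_reflect_eq_of_reflect_succ (hA_deg _) (hA_refl _ n.succ_pos)]
  have hG_refl_toeplitz : PowerSeries.mk G =
      PowerSeries.mk (fun n => C (a n) * X ^ n) * PowerSeries.mk fun n => reflect n (A n) := by
    simpa only [← hG_def, hG_refl] using mk_reflect_toeplitz_sum a hA_deg
  linear_combination PowerSeries.C X * hG - PowerSeries.C X * hG_refl_toeplitz -
    PowerSeries.mk (fun n => C (a n) * X ^ n) * hA_refl_mk

theorem one_sub_X_mem_nonZeroDivisors : (1 - X : R[X]) ∈ R[X]⁰ :=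
  Polynomial.mem_nonZeroDivisors_iff.mpr fun r hr => by
    simpa using congrArg (coeff · 0) hr

theorem mk_sub_C_X_mul_mk_mem_nonZeroDivisors (ha : a 0 = 1) :
    PowerSeries.mk (fun n => C (a n) * X ^ n) - PowerSeries.C X * PowerSeries.mk (fun n => C (a n))
      ∈ (PowerSeries R[X])⁰ := by
  refine MvPowerSeries.mem_nonZeroDivisors_of_constantCoeff ?_
  change PowerSeries.constantCoeff _ ∈ _
  simpa [ha] using one_sub_X_mem_nonZeroDivisors (R := R)

end Toeplitz

theorem stmt16_general {R : Type*} [CommRing R] (a : ℕ → R) (ha : a 0 = 1)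
    (d H A G : ℕ → R[X]) (hdH : ToeplitzChow a d H) (hAG : ToeplitzAugChow a A G) :
    (PowerSeries.mk fun n => A n) *
        (PowerSeries.mk (fun n => C (a n) * X ^ n) -
          PowerSeries.C (R := R[X]) X * PowerSeries.mk fun n => C (a n)) =
      PowerSeries.C (R := R[X]) (1 - X) * PowerSeries.mk (fun n => C (a n) * X ^ n) ∧
    (PowerSeries.mk fun n => A n) =
      PowerSeries.C (R := R[X]) (1 - X) +
        PowerSeries.C (R := R[X]) X * (PowerSeries.mk fun n => H n) ∧
    (PowerSeries.mk fun n => G n) *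
        (PowerSeries.mk (fun n => C (a n) * X ^ n) -
          PowerSeries.C (R := R[X]) X * PowerSeries.mk fun n => C (a n)) =
      PowerSeries.C (R := R[X]) (1 - X) * PowerSeries.mk (fun n => C (a n) * X ^ n) *
        PowerSeries.mk fun n => C (a n) := by
  have hA := hAG.mk_mul_eq
  have hd := hdH.mk_mul_eq a ha
  have hH := hdH.mk_eq_mul
  have hG := hAG.mk_eq_mul
  refine ⟨hA, ?_, by rw [hG]; linear_combination PowerSeries.mk (fun n => C (a n)) * hA⟩
  rw [← mul_cancel_right_mem_nonZeroDivisors (mk_sub_C_X_mul_mk_mem_nonZeroDivisors a ha)]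
  linear_combination hA - PowerSeries.C X * PowerSeries.mk (fun n => C (a n)) * hd -
    PowerSeries.C X * (PowerSeries.mk (fun n => C (a n) * X ^ n) -
      PowerSeries.C X * PowerSeries.mk fun n => C (a n)) * hH

/-- `Σ Aₙ(t) zⁿ = (1-t)f(tz)/(f(tz)-t f(z)) = 1 - t + t·H(z,t)` and
`Σ Gₙ(t) zⁿ = (1-t)f(tz)f(z)/(f(tz)-t f(z))`, stated multiplicatively. -/
theorem stmt16 {R : Type*} [CommRing R] [IsDomain R] (a : ℕ → R) (ha : a 0 = 1)
    (d H A G : ℕ → R[X]) (hdH : ToeplitzChow a d H) (hAG : ToeplitzAugChow a A G) :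
    (PowerSeries.mk fun n => A n) *
        (PowerSeries.mk (fun n => C (a n) * X ^ n) -
          PowerSeries.C (R := R[X]) X * PowerSeries.mk fun n => C (a n)) =
      PowerSeries.C (R := R[X]) (1 - X) * PowerSeries.mk (fun n => C (a n) * X ^ n) ∧
    (PowerSeries.mk fun n => A n) =
      PowerSeries.C (R := R[X]) (1 - X) +
        PowerSeries.C (R := R[X]) X * (PowerSeries.mk fun n => H n) ∧
    (PowerSeries.mk fun n => G n) *
        (PowerSeries.mk (fun n => C (a n) * X ^ n) -
          PowerSeries.C (R := R[X]) X * PowerSeries.mk fun n => C (a n)) =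
      PowerSeries.C (R := R[X]) (1 - X) * PowerSeries.mk (fun n => C (a n) * X ^ n) *
        PowerSeries.mk fun n => C (a n) :=
  stmt16_general a ha d H A G hdH hAG
end

section
/- Let P be a locally finite poset with weak rank function ρ and let g be an element of the incidence algebra with g_{x,x} = 1 and deg g_{x,y} < ρ(x,y)/2 for x < y. Then there exist unique functions H and d in the incidence algebra with deg-bounds deg ≤ ρ such that: d_{x,x} = 1; I(H) = tH + (1-t)δ; I(d) = d; and H = d·g (convolution). Moreover d satisfies d_{x,y} = t·S_{ρ(x,y)-1}(Σ_{x≤z<y} d_{x,z} g_{z,y}) for x < y. -/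
open Polynomial

/-- `Spoly n f = (Iₙ(f) - f)/(t-1)` where `Iₙ(f)(t) = tⁿ f(1/t)` is the reversal. -/
noncomputable def Spoly {R : Type*} [CommRing R] (n : ℕ) (f : R[X]) : R[X] :=
  (reflect n f - f) /ₘ (X - C 1)

/-- `H`, `d` form a Chow / Chow-derangement pair for `g` in the incidence algebra of
the locally finite poset `P` with weak rank function `ρ`: both have degree bounded
by `ρ`, `d_{x,x} = 1`, `I(H) = tH + (1-t)δ`, `I(d) = d`, and `H = d·g`
(convolution). -/
def ChowPairOn {P : Type*} [PartialOrder P] [DecidableEq P] [LocallyFiniteOrder P]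
    {R : Type*} [CommRing R] (ρ : P → P → ℕ) (g H d : P → P → R[X]) : Prop :=
  (∀ x y : P, x ≤ y → (H x y).natDegree ≤ ρ x y ∧ (d x y).natDegree ≤ ρ x y) ∧
  (∀ x : P, d x x = 1) ∧
  (∀ x y : P, x ≤ y →
    reflect (ρ x y) (H x y) = X * H x y + (if x = y then (1 : R[X]) - X else 0)) ∧
  (∀ x y : P, x ≤ y → reflect (ρ x y) (d x y) = d x y) ∧
  (∀ x y : P, x ≤ y → H x y = ∑ z ∈ Finset.Icc x y, d x z * g z y)

/-!
Write `F_{x,y} = Σ_{x ≤ z < y} d_{x,z} g_{z,y}`, so that `H_{x,y} = d_{x,y} + F_{x,y}` when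
`g_{y,y} = 1`. For `d` and `F` of degree at most `n = ρ(x,y)`, the pair of conditions `I(d) = d`,
`I(d + F) = t (d + F)` is equivalent to the single equation `(t - 1) d = I(F) - t F`: one direction
is subtraction, the other reverses the equation in degree `n + 1`, which turns `t - 1` into `1 - t`.
Since `t - 1` is monic, hence a nonzerodivisor, this equation determines `d_{x,y}` from the values
`d_{x,z}` with `z < y`, and as `deg g_{z,y} < ρ(z,y)` forces `deg F < n`, its solution is
`t S_{n-1}(F)`. Induction over the intervals `[x, y]` gives existence and uniqueness at once.
-/

namespace Polynomial

variable {R : Type*} [CommRing R]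

theorem eval_one_reflect (n : ℕ) (f : R[X]) : (reflect n f).eval 1 = f.eval 1 := by
  induction f using Polynomial.induction_on' with
  | add p q hp hq => rw [reflect_add, eval_add, eval_add, hp, hq]
  | monomial i a => simp [← C_mul_X_pow_eq_monomial, reflect_C_mul, reflect_monomial]

theorem reflect_succ_of_natDegree_le {n : ℕ} {f : R[X]} (hf : f.natDegree ≤ n) :
    reflect (n + 1) f = X * reflect n f := by
  simpa [reflect_one, mul_comm] using reflect_mul f 1 hf (natDegree_one.trans_le zero_le_one)

theorem reflect_succ_X_mul {n : ℕ} {f : R[X]} (hf : f.natDegree ≤ n) :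
    reflect (n + 1) (X * f) = reflect n f := by
  simpa [add_comm] using reflect_mul X f natDegree_X_le hf

theorem natDegree_reflect_le_of_natDegree_le {n : ℕ} {f : R[X]} (hf : f.natDegree ≤ n) :
    (reflect n f).natDegree ≤ n :=
  natDegree_reflect_le.trans (max_le le_rfl hf)

theorem reflect_eq_self_and_reflect_add_iff {n : ℕ} {d f : R[X]} (hd : d.natDegree ≤ n)
    (hf : f.natDegree ≤ n) :
    (reflect n d = d ∧ reflect n (d + f) = X * (d + f)) ↔
      (X - C 1) * d = reflect n f - X * f := by
  rw [C_1]
  constructor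
  · rintro ⟨hd_refl, hdf⟩
    rw [reflect_add, hd_refl] at hdf
    linear_combination -hdf
  · intro h
    have hlin : reflect 1 (X - 1 : R[X]) = 1 - X := by
      rw [reflect_sub, reflect_one_X, reflect_one, pow_one]
    have hreflect : (1 - X) * reflect n d = X * f - reflect n f := by
      have := congrArg (reflect (1 + n)) h
      have hlin_deg : (X - 1 : R[X]).natDegree ≤ 1 :=
        (natDegree_sub_le _ _).trans (max_le natDegree_X_le (by simp))
      rwa [reflect_mul _ _ hlin_deg hd, hlin, add_comm, reflect_sub, reflect_succ_X_mul hf,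
        reflect_succ_of_natDegree_le (natDegree_reflect_le_of_natDegree_le hf),
        reflect_reflect] at this
    have hd_refl : reflect n d = d :=
      (monic_X_sub_C (1 : R)).isRegular.left <| by
        simp only [C_1]
        linear_combination -h - hreflect
    refine ⟨hd_refl, ?_⟩
    rw [reflect_add, hd_refl]
    linear_combination -h

end Polynomial

section Spoly

variable {R : Type*} [CommRing R]

theorem X_sub_C_one_mul_Spoly (n : ℕ) (f : R[X]) :
    (X - C 1) * Spoly n f = reflect n f - f :=
  mul_divByMonic_eq_iff_isRoot.mpr <| by simp [eval_one_reflect]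

theorem natDegree_Spoly_le {n : ℕ} {f : R[X]} (hf : f.natDegree ≤ n) :
    (Spoly n f).natDegree ≤ n - 1 := by
  have : (reflect n f - f).natDegree ≤ n :=
    (natDegree_sub_le _ _).trans (max_le (natDegree_reflect_le_of_natDegree_le hf) hf)
  nontriviality R
  rw [Spoly, natDegree_divByMonic _ (monic_X_sub_C 1), natDegree_X_sub_C]
  omega

theorem X_sub_C_one_mul_eq_iff_eq_X_mul_Spoly {m : ℕ} {d f : R[X]} (hf : f.natDegree ≤ m) :
    (X - C 1) * d = reflect (m + 1) f - X * f ↔ d = X * Spoly m f := by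
  have hspoly : (X - C 1) * (X * Spoly m f) = reflect (m + 1) f - X * f := by
    rw [reflect_succ_of_natDegree_le hf, mul_left_comm, X_sub_C_one_mul_Spoly]
    ring
  rw [← hspoly]
  exact (monic_X_sub_C (1 : R)).isRegular.left.eq_iff

theorem natDegree_X_mul_Spoly_le {m : ℕ} {f : R[X]} (hf : f.natDegree ≤ m) :
    (X * Spoly m f).natDegree ≤ m + 1 :=
  (natDegree_mul_le.trans (add_le_add natDegree_X_le (natDegree_Spoly_le hf))).trans (by omega)

end Spoly

section Poset

variable {P : Type*} [PartialOrder P] [LocallyFiniteOrder P]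

theorem card_Icc_lt_card_Icc_of_mem_Ico {x y z : P} (hz : z ∈ Finset.Ico x y) :
    (Finset.Icc x z).card < (Finset.Icc x y).card := by
  rw [Finset.mem_Ico] at hz
  exact Finset.card_lt_card (Finset.Icc_ssubset_Icc_right (hz.1.trans hz.2.le) le_rfl hz.2)

theorem induction_on_Ico (x : P) {p : P → Prop}
    (step : ∀ y, (∀ z ∈ Finset.Ico x y, p z) → p y) (y : P) : p y :=
  step y fun z _ => induction_on_Ico x step z
termination_by (Finset.Icc x y).card
decreasing_by exact card_Icc_lt_card_Icc_of_mem_Ico ‹_›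

variable {R : Type*} [CommRing R]

noncomputable def convIco (d g : P → P → R[X]) (x y : P) : R[X] :=
  ∑ z ∈ Finset.Ico x y, d x z * g z y

theorem sum_Icc_eq_add_convIco {d g : P → P → R[X]} {x y : P} (hg : g y y = 1) (hxy : x ≤ y) :
    ∑ z ∈ Finset.Icc x y, d x z * g z y = d x y + convIco d g x y := by
  rw [convIco, Finset.Icc_eq_cons_Ico hxy, Finset.sum_cons, hg, mul_one]

theorem natDegree_convIco_le {ρ : P → P → ℕ}
    (hρadd : ∀ x z y : P, x ≤ z → z ≤ y → ρ x y = ρ x z + ρ z y)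
    {d g : P → P → R[X]} {x y : P}
    (hd : ∀ z ∈ Finset.Ico x y, (d x z).natDegree ≤ ρ x z)
    (hg : ∀ z ∈ Finset.Ico x y, (g z y).natDegree < ρ z y) :
    (convIco d g x y).natDegree ≤ ρ x y - 1 := by
  refine natDegree_sum_le_of_forall_le _ _ fun z hz => natDegree_mul_le.trans ?_
  have hadd := hρadd x z y (Finset.mem_Ico.mp hz).1 (Finset.mem_Ico.mp hz).2.le
  have := hd z hz
  have := hg z hz
  omega

variable [DecidableEq P] (ρ : P → P → ℕ) (g : P → P → R[X])

noncomputable def chowDerangement (x y : P) : R[X] :=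
  if x = y then 1
  else X * Spoly (ρ x y - 1) (∑ z ∈ (Finset.Ico x y).attach, chowDerangement x z * g z y)
termination_by (Finset.Icc x y).card
decreasing_by exact card_Icc_lt_card_Icc_of_mem_Ico z.2

noncomputable def chowFunction (x y : P) : R[X] :=
  ∑ z ∈ Finset.Icc x y, chowDerangement ρ g x z * g z y

theorem chowDerangement_self (x : P) : chowDerangement ρ g x x = 1 := by
  rw [chowDerangement, if_pos rfl]

theorem chowDerangement_of_ne {x y : P} (hxy : x ≠ y) :
    chowDerangement ρ g x y =
      X * Spoly (ρ x y - 1) (convIco (chowDerangement ρ g) g x y) := by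
  rw [chowDerangement, if_neg hxy, convIco,
    Finset.sum_attach (Finset.Ico x y) fun z => chowDerangement ρ g x z * g z y]

variable {ρ g}

theorem natDegree_chowDerangement_le
    (hρadd : ∀ x z y : P, x ≤ z → z ≤ y → ρ x y = ρ x z + ρ z y)
    (hgdeg : ∀ x y : P, x < y → (g x y).natDegree < ρ x y) {x y : P} (hxy : x ≤ y) :
    (chowDerangement ρ g x y).natDegree ≤ ρ x y := by
  induction y using induction_on_Ico x with
  | step y ih =>
    rcases hxy.eq_or_lt with rfl | hlt
    · simp [chowDerangement_self]
    have hF : (convIco (chowDerangement ρ g) g x y).natDegree ≤ ρ x y - 1 :=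
      natDegree_convIco_le hρadd (fun z hz => ih z hz (Finset.mem_Ico.mp hz).1)
        (fun z hz => hgdeg z y (Finset.mem_Ico.mp hz).2)
    have := hgdeg x y hlt
    rw [chowDerangement_of_ne ρ g hlt.ne]
    exact (natDegree_X_mul_Spoly_le hF).trans_eq (by omega)

theorem natDegree_convIco_chowDerangement_le
    (hρadd : ∀ x z y : P, x ≤ z → z ≤ y → ρ x y = ρ x z + ρ z y)
    (hgdeg : ∀ x y : P, x < y → (g x y).natDegree < ρ x y) {x y : P} :
    (convIco (chowDerangement ρ g) g x y).natDegree ≤ ρ x y - 1 :=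
  natDegree_convIco_le hρadd
    (fun _ hz => natDegree_chowDerangement_le hρadd hgdeg (Finset.mem_Ico.mp hz).1)
    (fun _ hz => hgdeg _ _ (Finset.mem_Ico.mp hz).2)

theorem reflect_chowDerangement_iff
    (hρadd : ∀ x z y : P, x ≤ z → z ≤ y → ρ x y = ρ x z + ρ z y)
    (hgdeg : ∀ x y : P, x < y → (g x y).natDegree < ρ x y) {x y : P} (hlt : x < y)
    {d : R[X]} (hd : d.natDegree ≤ ρ x y) :
    (reflect (ρ x y) d = d ∧
        reflect (ρ x y) (d + convIco (chowDerangement ρ g) g x y) =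
          X * (d + convIco (chowDerangement ρ g) g x y)) ↔
      d = chowDerangement ρ g x y := by
  obtain ⟨m, hm⟩ : ∃ m, ρ x y = m + 1 := ⟨ρ x y - 1, by have := hgdeg x y hlt; omega⟩
  have hF : (convIco (chowDerangement ρ g) g x y).natDegree ≤ m := by
    simpa [hm] using natDegree_convIco_chowDerangement_le hρadd hgdeg (x := x) (y := y)
  rw [hm] at hd ⊢
  rw [reflect_eq_self_and_reflect_add_iff hd (hF.trans m.le_succ),
    X_sub_C_one_mul_eq_iff_eq_X_mul_Spoly hF, chowDerangement_of_ne ρ g hlt.ne, hm,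
    Nat.add_sub_cancel]

theorem chowFunction_eq_add (hg1 : ∀ x : P, g x x = 1) {x y : P} (hxy : x ≤ y) :
    chowFunction ρ g x y = chowDerangement ρ g x y + convIco (chowDerangement ρ g) g x y :=
  sum_Icc_eq_add_convIco (hg1 y) hxy

theorem chowPairOn_chowFunction_chowDerangement
    (hρadd : ∀ x z y : P, x ≤ z → z ≤ y → ρ x y = ρ x z + ρ z y)
    (hg1 : ∀ x : P, g x x = 1) (hgdeg : ∀ x y : P, x < y → (g x y).natDegree < ρ x y) :
    ChowPairOn ρ g (chowFunction ρ g) (chowDerangement ρ g) := by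
  have hρself (x : P) : ρ x x = 0 := by have := hρadd x x x le_rfl le_rfl; omega
  have hdeg {x y : P} (hxy : x ≤ y) := natDegree_chowDerangement_le hρadd hgdeg hxy
  refine ⟨fun x y hxy => ⟨?_, hdeg hxy⟩, chowDerangement_self ρ g, fun x y hxy => ?_,
    fun x y hxy => ?_, fun x y hxy => rfl⟩
  · rw [chowFunction_eq_add hg1 hxy]
    exact natDegree_add_le_of_degree_le (hdeg hxy)
      ((natDegree_convIco_chowDerangement_le hρadd hgdeg).trans (Nat.sub_le _ _))
  · rcases hxy.eq_or_lt with rfl | hlt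
    · simp [chowFunction_eq_add hg1, chowDerangement_self, convIco, hρself]
    · rw [if_neg hlt.ne, add_zero, chowFunction_eq_add hg1 hlt.le]
      exact ((reflect_chowDerangement_iff hρadd hgdeg hlt (hdeg hxy)).mpr rfl).2
  · rcases hxy.eq_or_lt with rfl | hlt
    · simp [chowDerangement_self, hρself]
    · exact ((reflect_chowDerangement_iff hρadd hgdeg hlt (hdeg hxy)).mpr rfl).1

theorem ChowPairOn.eq_chowDerangement
    (hρadd : ∀ x z y : P, x ≤ z → z ≤ y → ρ x y = ρ x z + ρ z y)
    (hg1 : ∀ x : P, g x x = 1) (hgdeg : ∀ x y : P, x < y → (g x y).natDegree < ρ x y)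
    {H d : P → P → R[X]} (h : ChowPairOn ρ g H d) {x y : P} (hxy : x ≤ y) :
    d x y = chowDerangement ρ g x y := by
  obtain ⟨hdeg, hdiag, hreflect_H, hreflect_d, hconv⟩ := h
  induction y using induction_on_Ico x with
  | step y ih =>
    rcases hxy.eq_or_lt with rfl | hlt
    · rw [hdiag, chowDerangement_self]
    have hF : convIco d g x y = convIco (chowDerangement ρ g) g x y :=
      Finset.sum_congr rfl fun z hz => by rw [ih z hz (Finset.mem_Ico.mp hz).1]
    have hH : H x y = d x y + convIco (chowDerangement ρ g) g x y := by
      rw [hconv x y hxy, sum_Icc_eq_add_convIco (hg1 y) hxy, hF]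
    refine (reflect_chowDerangement_iff hρadd hgdeg hlt (hdeg x y hxy).2).mp
      ⟨hreflect_d x y hxy, ?_⟩
    rw [← hH, hreflect_H x y hxy, if_neg hlt.ne, add_zero]

theorem ChowPairOn.eq_chowFunction
    (hρadd : ∀ x z y : P, x ≤ z → z ≤ y → ρ x y = ρ x z + ρ z y)
    (hg1 : ∀ x : P, g x x = 1) (hgdeg : ∀ x y : P, x < y → (g x y).natDegree < ρ x y)
    {H d : P → P → R[X]} (h : ChowPairOn ρ g H d) {x y : P} (hxy : x ≤ y) :
    H x y = chowFunction ρ g x y := by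
  rw [h.2.2.2.2 x y hxy, chowFunction]
  exact Finset.sum_congr rfl fun z hz => by
    rw [h.eq_chowDerangement hρadd hg1 hgdeg (Finset.mem_Icc.mp hz).1]

end Poset

theorem stmt17_general {P : Type*} [PartialOrder P] [DecidableEq P] [LocallyFiniteOrder P]
    {R : Type*} [CommRing R]
    (ρ : P → P → ℕ)
    (hρadd : ∀ x z y : P, x ≤ z → z ≤ y → ρ x y = ρ x z + ρ z y)
    (g : P → P → R[X])
    (hg1 : ∀ x : P, g x x = 1)
    (hgdeg : ∀ x y : P, x < y → 2 * (g x y).natDegree < ρ x y) :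
    ∃ H d : P → P → R[X], ChowPairOn ρ g H d ∧
      (∀ H' d' : P → P → R[X], ChowPairOn ρ g H' d' →
        ∀ x y : P, x ≤ y → H' x y = H x y ∧ d' x y = d x y) ∧
      (∀ x y : P, x < y →
        d x y = X * Spoly (ρ x y - 1) (∑ z ∈ Finset.Ico x y, d x z * g z y)) := by
  have hgdeg' (x y : P) (hxy : x < y) : (g x y).natDegree < ρ x y := by
    have := hgdeg x y hxy
    omega
  refine ⟨chowFunction ρ g, chowDerangement ρ g,
    chowPairOn_chowFunction_chowDerangement hρadd hg1 hgdeg', ?_,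
    fun x y hlt => chowDerangement_of_ne ρ g hlt.ne⟩
  intro H' d' h x y hxy
  exact ⟨h.eq_chowFunction hρadd hg1 hgdeg' hxy, h.eq_chowDerangement hρadd hg1 hgdeg' hxy⟩

theorem stmt17 {P : Type*} [PartialOrder P] [DecidableEq P] [LocallyFiniteOrder P]
    {R : Type*} [CommRing R] [IsDomain R]
    (ρ : P → P → ℕ)
    (hρpos : ∀ x y : P, 0 < ρ x y ↔ x < y)
    (hρadd : ∀ x z y : P, x ≤ z → z ≤ y → ρ x y = ρ x z + ρ z y)
    (g : P → P → R[X])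
    (hg1 : ∀ x : P, g x x = 1)
    (hgdeg : ∀ x y : P, x < y → 2 * (g x y).natDegree < ρ x y) :
    ∃ H d : P → P → R[X], ChowPairOn ρ g H d ∧
      (∀ H' d' : P → P → R[X], ChowPairOn ρ g H' d' →
        ∀ x y : P, x ≤ y → H' x y = H x y ∧ d' x y = d x y) ∧
      (∀ x y : P, x < y →
        d x y = X * Spoly (ρ x y - 1) (∑ z ∈ Finset.Ico x y, d x z * g z y)) :=
  stmt17_general ρ hρadd g hg1 hgdeg
end
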